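/- arXiv:1506.02695 — 4 statements merged into one kernel-verified Lean document; each statement's English description precedes it below -/
import Mathlib

section
/- Let G be a finite group with rank(G) = rank(G/G'). Then for every positive integer n, rank(G^n) = n · rank(G). -/
open Subgroup

/-- Minimal length of a word over `X` (positive letters only) representing `g`. -/
noncomputable def wLen {G : Type*} [Group G] (X : Set G) (g : G) : ℕ :=
  sInf {n | ∃ l : List G, (∀ x ∈ l, x ∈ X) ∧ l.length = n ∧ l.prod = g}

/-- Minimal length of a word over `X ∪ X⁻¹` representing `g`. -/
noncomputable def sLen {G : Type*} [Group G] (X : Set G) (g : G) : ℕ :=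
  sInf {n | ∃ l : List G, (∀ x ∈ l, x ∈ X ∨ x⁻¹ ∈ X) ∧ l.length = n ∧ l.prod = g}

/-- Diameter of `G` with respect to `X` (positive words). -/
noncomputable def diamW (G : Type*) [Group G] (X : Set G) : ℕ :=
  sSup (Set.range (wLen X))

/-- Symmetric diameter of `G` with respect to `X`. -/
noncomputable def diamS (G : Type*) [Group G] (X : Set G) : ℕ :=
  sSup (Set.range (sLen X))

/-- Maximum diameter over all generating sets. -/
noncomputable def DW (G : Type*) [Group G] : ℕ :=
  sSup {d | ∃ X : Set G, Subgroup.closure X = ⊤ ∧ d = diamW G X}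

/-- Maximum symmetric diameter over all generating sets. -/
noncomputable def DS (G : Type*) [Group G] : ℕ :=
  sSup {d | ∃ X : Set G, Subgroup.closure X = ⊤ ∧ d = diamS G X}

/-- Minimal size of a generating set of `G`. -/
noncomputable def rk (G : Type*) [Group G] : ℕ :=
  sInf {n | ∃ S : Finset G, S.card = n ∧ Subgroup.closure (S : Set G) = ⊤}

/-!
The bound `rk (G^n) ≤ n * rk G` comes from placing a generating set of `G` in each coordinate.
For the reverse bound, `G^n` maps onto `A^n` with `A = G/G'`. Write the finite abelian group `A`
as `∏ ZMod (p_i ^ e_i)` and let `q` be a prime with the largest number `k` of nontrivial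
`q`-primary factors. Colouring the factors with `k` colours so that factors of the same colour
have coprime orders, the Chinese remainder theorem merges each colour class into one cyclic
group, so `rk A ≤ k`. On the other hand `A^n` maps onto `(ZMod q)^(n k)`, and a group surjecting
onto a vector space needs at least its dimension many generators. Hence
`n * rk G = n * rk A ≤ n * k ≤ rk (A^n) ≤ rk (G^n)`.
-/

lemma rk_eq_rank (G : Type*) [Group G] [Group.FG G] : rk G = Group.rank G := by
  obtain ⟨S, hcard, hS⟩ := Group.rank_spec G
  have hmem : Group.rank G ∈
      {n | ∃ S : Finset G, S.card = n ∧ Subgroup.closure (S : Set G) = ⊤} :=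
    ⟨S, hcard, hS⟩
  obtain ⟨T, hcard, hT⟩ := Nat.sInf_mem ⟨_, hmem⟩
  exact le_antisymm (Nat.sInf_le hmem) ((Group.rank_le hT).trans_eq hcard)

namespace Group

lemma rank_pi_le_sum {ι : Type*} [Fintype ι] {H : ι → Type*} [∀ i, Group (H i)]
    [∀ i, Group.FG (H i)] : rank (Π i, H i) ≤ ∑ i, rank (H i) := by
  classical
  choose S hcard hS using fun i => rank_spec (H i)
  set T := Finset.univ.biUnion fun i => (S i).image (MonoidHom.mulSingle H i)
  have hsingle : ∀ i, (Subgroup.closure (S i : Set (H i))).map (MonoidHom.mulSingle H i) ≤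
      Subgroup.closure (T : Set (Π i, H i)) := by
    intro i
    rw [MonoidHom.map_closure]
    refine Subgroup.closure_mono ?_
    rintro _ ⟨x, hx, rfl⟩
    simp only [T, Finset.coe_biUnion, Finset.coe_image, Set.mem_iUnion]
    exact ⟨i, Finset.mem_coe.mpr (Finset.mem_univ i), x, hx, rfl⟩
  have hT : Subgroup.closure (T : Set (Π i, H i)) = ⊤ := by
    refine (Subgroup.eq_top_iff' _).mpr fun x => ?_
    rw [← Finset.noncommProd_mulSingle x]
    exact noncommProd_mem _ _ fun i _ => hsingle i (mem_map_of_mem _ (by simp [hS i]))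
  calc rank (Π i, H i) ≤ T.card := rank_le hT
    _ ≤ ∑ i, ((S i).image (MonoidHom.mulSingle H i)).card := Finset.card_biUnion_le
    _ ≤ ∑ i, rank (H i) := Finset.sum_le_sum fun i _ => (hcard i) ▸ Finset.card_image_le

lemma rank_pi_le {ι G : Type*} [Fintype ι] [Group G] [Group.FG G] :
    rank (ι → G) ≤ Fintype.card ι * rank G := by
  simpa using rank_pi_le_sum (H := fun _ : ι => G)

lemma rank_le_one_of_isCyclic {G : Type*} [Group G] [IsCyclic G] [Group.FG G] : rank G ≤ 1 := by
  obtain ⟨g, hg⟩ := IsCyclic.exists_generator (α := G)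
  refine (rank_le (S := {g}) ?_).trans_eq (Finset.card_singleton g)
  rw [Finset.coe_singleton, ← Subgroup.zpowers_eq_closure, eq_top_iff']
  exact hg

lemma finrank_le_rank_of_surjective {H K V : Type*} [Group H] [Group.FG H] [DivisionRing K]
    [AddCommGroup V] [Module K V] (f : H →* Multiplicative V) (hf : Function.Surjective f) :
    Module.finrank K V ≤ rank H := by
  classical
  obtain ⟨S, hcard, hS⟩ := rank_spec H
  set T := S.image fun h => (f h).toAdd
  have hspan : Submodule.span K (T : Set V) = ⊤ := by
    have hle : Subgroup.closure (S : Set H) ≤ (AddSubgroup.toSubgroup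
        (Submodule.span K (T : Set V)).toAddSubgroup).comap f := by
      refine (Subgroup.closure_le _).mpr fun h hh => Submodule.subset_span ?_
      exact Finset.mem_image_of_mem _ hh
    rw [hS] at hle
    refine eq_top_iff.mpr fun v _ => ?_
    obtain ⟨h, hh⟩ := hf (Multiplicative.ofAdd v)
    simpa [hh] using hle (Subgroup.mem_top h)
  calc Module.finrank K V = Module.finrank K (Submodule.span K (T : Set V)) := by
        rw [hspan, finrank_top]
    _ ≤ T.card := finrank_span_finset_le_card T
    _ ≤ S.card := Finset.card_image_le
    _ = rank H := hcard

lemma card_mul_finrank_le_rank_pi {ι H K V : Type*} [Fintype ι] [Group H] [Group.FG H]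
    [DivisionRing K] [AddCommGroup V] [Module K V] [FiniteDimensional K V]
    (f : H →* Multiplicative V) (hf : Function.Surjective f) :
    Fintype.card ι * Module.finrank K V ≤ rank (ι → H) := by
  let F : (ι → H) →* Multiplicative (ι → V) :=
    (MulEquiv.piMultiplicative fun _ => V).symm.toMonoidHom.comp (MonoidHom.piMap fun _ => f)
  have hF : Function.Surjective F :=
    (MulEquiv.surjective (MulEquiv.piMultiplicative fun _ => V).symm).comp
      (Function.Surjective.piMap fun _ => hf)
  simpa [Module.finrank_pi_fintype] using finrank_le_rank_of_surjective (K := K) F hF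

end Group

lemma rank_multiplicative_pi_zmod_le {κ : Type*} [Fintype κ] (m : κ → ℕ)
    [∀ j, NeZero (m j)] :
    Group.rank (Multiplicative (Π j, ZMod (m j))) ≤ Fintype.card κ := by
  rw [Group.rank_congr (MulEquiv.piMultiplicative _)]
  calc Group.rank (Π j, Multiplicative (ZMod (m j)))
      ≤ ∑ j, Group.rank (Multiplicative (ZMod (m j))) := Group.rank_pi_le_sum
    _ ≤ ∑ _j : κ, 1 := Finset.sum_le_sum fun _ _ => Group.rank_le_one_of_isCyclic
    _ = Fintype.card κ := by simp

open Function in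
lemma rank_multiplicative_pi_zmod_le_of_coprime {ι : Type*} [Fintype ι] (n : ι → ℕ)
    [∀ i, NeZero (n i)] {k : ℕ} (c : ι → Fin k)
    (hc : ∀ i j, i ≠ j → c i = c j → (n i).Coprime (n j)) :
    Group.rank (Multiplicative (Π i, ZMod (n i))) ≤ k := by
  let m : Fin k → ℕ := fun j => ∏ i : {i // c i = j}, n i
  have : ∀ j, NeZero (m j) := fun j => ⟨Finset.prod_ne_zero_iff.mpr fun i _ => NeZero.ne _⟩
  have hcop : ∀ j, Pairwise (Nat.Coprime on fun i : {i // c i = j} => n i) :=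
    fun j a b hab => hc a b (Subtype.coe_injective.ne hab) (a.2.trans b.2.symm)
  have hdvd : ∀ i, n i ∣ m (c i) := fun i =>
    Finset.dvd_prod_of_mem (fun i : {i' // c i' = c i} => n i) (Finset.mem_univ ⟨i, rfl⟩)
  let f : (Π j, ZMod (m j)) →+ Π i, ZMod (n i) := AddMonoidHom.pi fun i =>
    (ZMod.castHom (hdvd i) _).toAddMonoidHom.comp (Pi.evalAddMonoidHom _ (c i))
  have hf : Surjective f := by
    intro y
    refine ⟨fun j => (ZMod.prodEquivPi _ (hcop j)).symm fun i => y i, funext fun i => ?_⟩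
    let e := ZMod.prodEquivPi _ (hcop (c i))
    have hi : e (e.symm fun i => y i) ⟨i, rfl⟩ = y i := by rw [RingEquiv.apply_symm_apply]
    rwa [ZMod.prodEquivPi_apply] at hi
  calc Group.rank (Multiplicative (Π i, ZMod (n i)))
      ≤ Group.rank (Multiplicative (Π j, ZMod (m j))) :=
        Group.rank_le_of_surjective (AddMonoidHom.toMultiplicative f) hf
    _ ≤ k := (rank_multiplicative_pi_zmod_le m).trans_eq (Fintype.card_fin k)

def primaryIndices {ι : Type*} [Fintype ι] (p e : ι → ℕ) (q : ℕ) : Finset ι :=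
  Finset.univ.filter fun i => e i ≠ 0 ∧ p i = q

section PrimePowers

variable {ι : Type*} [Fintype ι] (p e : ι → ℕ)

lemma exists_surjective_pi_zmod_primaryIndices (q : ℕ) :
    ∃ f : (Π i, ZMod (p i ^ e i)) →+ (primaryIndices p e q → ZMod q),
      Function.Surjective f := by
  classical
  have hdvd : ∀ i : primaryIndices p e q, q ∣ p i ^ e i := fun ⟨i, hi⟩ => by
    obtain ⟨he, rfl⟩ := (Finset.mem_filter.mp hi).2
    exact dvd_pow_self _ he
  refine ⟨AddMonoidHom.pi fun i =>
    (ZMod.castHom (hdvd i) _).toAddMonoidHom.comp (Pi.evalAddMonoidHom _ i.1), fun y => ?_⟩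
  choose z hz using fun i => ZMod.ringHom_surjective (ZMod.castHom (hdvd i) (ZMod q)) (y i)
  exact ⟨fun i => if h : i ∈ primaryIndices p e q then z ⟨i, h⟩ else 0,
    funext fun i => by simp [hz]⟩

variable [∀ i, Fact (p i).Prime]

lemma rank_le_of_card_primaryIndices_le {k : ℕ} (hk : ∀ q, (primaryIndices p e q).card ≤ k) :
    Group.rank (Multiplicative (Π i, ZMod (p i ^ e i))) ≤ k := by
  have hmem : ∀ i, e i ≠ 0 → i ∈ primaryIndices p e (p i) := by simp [primaryIndices]
  rcases Nat.eq_zero_or_pos k with rfl | hk0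
  · have he : ∀ i, e i = 0 := fun i => by_contra fun h =>
      (Finset.card_pos.mpr ⟨i, hmem i h⟩).ne' (Nat.le_zero.mp (hk (p i)))
    have : ∀ i, Subsingleton (ZMod (p i ^ e i)) := fun i =>
      ZMod.subsingleton_iff.mpr (by simp [he i])
    exact (Group.rank_eq_zero _).le
  have : Nonempty (Fin k) := ⟨⟨0, hk0⟩⟩
  choose g hg using fun q => Set.exists_injOn_iff_injective.mpr
    ⟨_, (Fin.castLE_injective (hk q)).comp (primaryIndices p e q).equivFin.injective⟩
  refine rank_multiplicative_pi_zmod_le_of_coprime _ (fun i => g (p i) i) fun i j hij hgij => ?_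
  by_cases hi : e i = 0
  · simp [hi]
  by_cases hj : e j = 0
  · simp [hj]
  refine Nat.Coprime.pow _ _ ((Nat.coprime_primes Fact.out Fact.out).mpr fun hpij => hij ?_)
  rw [← hpij] at hgij
  exact hg (p i) (hmem i hi) (hpij ▸ hmem j hj) hgij

lemma exists_prime_surjective_pi_zmod_prime_pow :
    ∃ q, q.Prime ∧ ∃ s : Finset ι,
      Group.rank (Multiplicative (Π i, ZMod (p i ^ e i))) ≤ s.card ∧
      ∃ f : (Π i, ZMod (p i ^ e i)) →+ (s → ZMod q), Function.Surjective f := by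
  classical
  obtain ⟨q, hq, hmax⟩ := (insert 2 (Finset.univ.image p)).exists_max_image
    (fun q => (primaryIndices p e q).card) (Finset.insert_nonempty _ _)
  refine ⟨q, ?_, primaryIndices p e q, rank_le_of_card_primaryIndices_le p e fun q' => ?_,
    exists_surjective_pi_zmod_primaryIndices p e q⟩
  · rcases Finset.mem_insert.mp hq with rfl | hq
    · exact Nat.prime_two
    · obtain ⟨i, -, rfl⟩ := Finset.mem_image.mp hq
      exact Fact.out
  · rcases (primaryIndices p e q').eq_empty_or_nonempty with h | ⟨i, hi⟩
    · simp [h]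
    · obtain ⟨-, rfl⟩ := (Finset.mem_filter.mp hi).2
      exact hmax _ (Finset.mem_insert_of_mem (Finset.mem_image_of_mem _ (Finset.mem_univ i)))

end PrimePowers

theorem CommGroup.exists_prime_surjective_pi_zmod (H : Type*) [CommGroup H] [Finite H] :
    ∃ (q : ℕ) (κ : Type) (_ : Fintype κ), q.Prime ∧ Group.rank H ≤ Fintype.card κ ∧
      ∃ f : H →* Multiplicative (κ → ZMod q), Function.Surjective f := by
  obtain ⟨ι, _, p, hp, e, ⟨φ⟩⟩ := AddCommGroup.equiv_directSum_zmod_of_finite (Additive H)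
  have := fun i => Fact.mk (hp i)
  let E : H ≃* Multiplicative (Π i, ZMod (p i ^ e i)) :=
    AddEquiv.toMultiplicativeRight (φ.trans (DirectSum.addEquivProd _))
  obtain ⟨q, hq, s, hs, f, hf⟩ := exists_prime_surjective_pi_zmod_prime_pow p e
  exact ⟨q, s, inferInstance, hq, (Group.rank_congr E).trans_le (by simpa using hs),
    f.toMultiplicative.comp E.toMonoidHom, hf.comp E.surjective⟩

theorem stmt4 {G : Type*} [Group G] [Fintype G]
    (h : rk G = rk (G ⧸ commutator G)) :
    ∀ n : ℕ, 0 < n → rk (Fin n → G) = n * rk G := by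
  intro n _
  rw [rk_eq_rank, rk_eq_rank] at h ⊢
  refine le_antisymm (Group.rank_pi_le.trans_eq (by simp)) ?_
  obtain ⟨q, κ, _, hq, hrank, f, hf⟩ :=
    CommGroup.exists_prime_surjective_pi_zmod (Abelianization G)
  have := Fact.mk hq
  calc n * Group.rank G = n * Group.rank (Abelianization G) := by rw [h]; rfl
    _ ≤ Fintype.card (Fin n) * Module.finrank (ZMod q) (κ → ZMod q) := by
        simpa using Nat.mul_le_mul_left n hrank
    _ ≤ Group.rank (Fin n → G) :=
        Group.card_mul_finrank_le_rank_pi (f.comp Abelianization.of)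
          (hf.comp (QuotientGroup.mk'_surjective _))
end

section
/- Let G be a finite group with generating set X and normal subgroup H, and let T be a right transversal of H in G with 1 ∈ T and every element of T of X-length at most D(G/H). Then diam(G,X) ≤ D(G/H) + (D(G/H) + 1 + max_{t∈T} l_X(t^{-1})) · D(H). -/
open Subgroup

/-!
Every `g ∈ G` factors as `h * t` with `t ∈ T` and `h ∈ H`. The transversal element costs at most
`D(G/H)` letters. By Schreier's lemma `H` is generated by the elements `t * x * t₁⁻¹`
(`t, t₁ ∈ T`, `x ∈ X`), each a word of length at most `D(G/H) + 1 + max l_X(t₁⁻¹)` over `X`;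
as a generating set of `H` they reach every `h` in at most `D(H)` letters.
-/

section WordLength

variable {G : Type*} [Group G] {X : Set G}

lemma Subgroup.submonoidClosure_eq_top_of_finite [Finite G] (hX : closure X = ⊤) :
    Submonoid.closure X = ⊤ := by
  rw [← closure_toSubmonoid_of_finite, hX, top_toSubmonoid]

lemma wLen_le_length {g : G} {l : List G} (hl : ∀ x ∈ l, x ∈ X) (hp : l.prod = g) :
    wLen X g ≤ l.length :=
  Nat.sInf_le ⟨l, hl, rfl, hp⟩

lemma wLen_le_one_of_mem {x : G} (hx : x ∈ X) : wLen X x ≤ 1 :=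
  wLen_le_length (l := [x]) (by simpa using hx) (by simp)

variable (hX : Submonoid.closure X = ⊤)
include hX

lemma exists_list_length_eq_wLen (g : G) :
    ∃ l : List G, (∀ x ∈ l, x ∈ X) ∧ l.length = wLen X g ∧ l.prod = g := by
  obtain ⟨l, hl, hp⟩ := Submonoid.exists_list_of_mem_closure (hX ▸ Submonoid.mem_top g)
  exact Nat.sInf_mem (s := {n | ∃ l : List G, (∀ x ∈ l, x ∈ X) ∧ l.length = n ∧ l.prod = g})
    ⟨l.length, l, hl, rfl, hp⟩

lemma wLen_mul_le (a b : G) : wLen X (a * b) ≤ wLen X a + wLen X b := by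
  obtain ⟨la, hla, hlena, rfl⟩ := exists_list_length_eq_wLen hX a
  obtain ⟨lb, hlb, hlenb, rfl⟩ := exists_list_length_eq_wLen hX b
  simpa [hlena, hlenb] using wLen_le_length (X := X) (l := la ++ lb)
    (by simpa [or_imp, forall_and] using ⟨hla, hlb⟩) List.prod_append

lemma wLen_mul_mul_inv_le {x : G} (hx : x ∈ X) (t s : G) :
    wLen X (t * x * s⁻¹) ≤ wLen X t + 1 + wLen X s⁻¹ :=
  calc wLen X (t * x * s⁻¹) ≤ wLen X t + wLen X x + wLen X s⁻¹ :=
        (wLen_mul_le hX _ _).trans (by gcongr; exact wLen_mul_le hX _ _)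
    _ ≤ wLen X t + 1 + wLen X s⁻¹ := by gcongr; exact wLen_le_one_of_mem hx

lemma wLen_list_prod_le {C : ℕ} :
    ∀ l : List G, (∀ a ∈ l, wLen X a ≤ C) → wLen X l.prod ≤ C * l.length
  | [], _ => by simpa using wLen_le_length (X := X) (l := []) (by simp) rfl
  | a :: l, h =>
    calc wLen X (a * l.prod) ≤ wLen X a + wLen X l.prod := wLen_mul_le hX a l.prod
      _ ≤ C + C * l.length :=
          add_le_add (h a List.mem_cons_self) (wLen_list_prod_le l fun b hb ↦ h b (by simp [hb]))
      _ = C * (l.length + 1) := by ring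

lemma wLen_map_le {K : Type*} [Group K] {Y : Set K} (hY : Submonoid.closure Y = ⊤) (φ : K →* G)
    {C : ℕ} (hC : ∀ y ∈ Y, wLen X (φ y) ≤ C) (k : K) : wLen X (φ k) ≤ C * wLen Y k := by
  obtain ⟨l, hl, hlen, rfl⟩ := exists_list_length_eq_wLen hY k
  rw [map_list_prod, ← hlen, ← List.length_map φ]
  exact wLen_list_prod_le hX _ (by simpa using fun y hy ↦ hC y (hl y hy))

end WordLength

lemma wLen_le_diamW {G : Type*} [Group G] [Finite G] (X : Set G) (g : G) :
    wLen X g ≤ diamW G X :=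
  le_csSup (Set.finite_range _).bddAbove ⟨g, rfl⟩

lemma diamW_le_DW {G : Type*} [Group G] [Finite G] {X : Set G} (hX : closure X = ⊤) :
    diamW G X ≤ DW G :=
  le_csSup ((Set.finite_range (diamW G)).subset (by rintro _ ⟨Y, -, rfl⟩; exact ⟨Y, rfl⟩)).bddAbove
    ⟨X, hX, rfl⟩

lemma wLen_le_DW {G : Type*} [Group G] [Finite G] {X : Set G} (hX : closure X = ⊤) (g : G) :
    wLen X g ≤ DW G :=
  (wLen_le_diamW X g).trans (diamW_le_DW hX)

open scoped Pointwise in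
theorem stmt15 {G : Type*} [Group G] [Finite G] (X : Set G)
    (hX : Subgroup.closure X = ⊤) (H : Subgroup G) [H.Normal]
    (T : Set G) (h1T : (1 : G) ∈ T)
    (htrans : ∀ g : G, ∃! t, t ∈ T ∧ g * t⁻¹ ∈ H)
    (hlen : ∀ t ∈ T, wLen X t ≤ DW (G ⧸ H)) :
    diamW G X ≤
      DW (G ⧸ H) + (DW (G ⧸ H) + 1 + sSup ((fun t => wLen X t⁻¹) '' T)) * DW ↥H := by
  set M := sSup ((fun t => wLen X t⁻¹) '' T)
  have hXm := submonoidClosure_eq_top_of_finite hX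
  have hR : IsComplement (H : Set G) T := isComplement_iff_existsUnique_mul_inv_mem.mpr fun g ↦
    (htrans g).exists.elim fun t ht ↦
      ⟨⟨t, ht.1⟩, ht.2, fun s hs ↦ Subtype.ext ((htrans g).unique ⟨s.2, hs⟩ ht)⟩
  have hM : ∀ t ∈ T, wLen X t⁻¹ ≤ M := fun t ht ↦
    le_csSup (Set.toFinite _).bddAbove ⟨t, ht, rfl⟩
  have hH (h : H) : wLen X (h : G) ≤ (DW (G ⧸ H) + 1 + M) * DW H := by
    have hS := closure_mul_image_eq_top hR h1T hX
    refine (wLen_map_le hXm (submonoidClosure_eq_top_of_finite hS) H.subtype ?_ h).trans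
      (Nat.mul_le_mul_left _ (wLen_le_DW hS h))
    rintro _ ⟨_, ⟨t, ht, x, hx, rfl⟩, rfl⟩
    exact (wLen_mul_mul_inv_le hXm hx _ _).trans
      (by gcongr; exacts [hlen t ht, hM _ (hR.toRightFun _).2])
  refine csSup_le ⟨_, 1, rfl⟩ ?_
  rintro _ ⟨g, rfl⟩
  calc wLen X g = wLen X (g * (hR.toRightFun g : G)⁻¹ * hR.toRightFun g) := by
        rw [inv_mul_cancel_right]
    _ ≤ (DW (G ⧸ H) + 1 + M) * DW H + DW (G ⧸ H) := (wLen_mul_le hXm _ _).trans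
        (add_le_add (hH ⟨_, hR.mul_inv_toRightFun_mem g⟩) (hlen _ (hR.toRightFun g).2))
    _ = _ := add_comm _ _
end

section
/- Let G be a finite solvable group of derived length l. Then for all n ≥ 1, D^s(G^n) ≤ 4^{l−1} · n^l · |G|, where D^s denotes the maximum symmetric diameter over all generating sets. -/
open Subgroup

/-!
Induction on the derived length. Let `k = |G/G'|` and `n = |ι|`. The quotient of `G^ι` by
`(G')^ι` is abelian of exponent dividing `k` and order `k^n`; in such a group every element is
a positive word of length at most `n k` in any generating set, because the relative orders `j_i`
along the chain of subgroups generated by more and more generators multiply to at most `k^n`,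
and `j - 1 ≤ k log_k j` for `1 ≤ j ≤ k`. By Schreier's lemma the elements of `(G')^ι` of
length at most `2nk + 1` generate it, which gives `D(G^ι) ≤ nk + (2nk + 1) D((G')^ι)`, and `G'`
has derived length `l - 1`.
-/

section WordLength

variable {G H : Type*} [Group G] [Group H] {X : Set G} {g h : G}

def IsSymmWord (X : Set G) (w : List G) : Prop := ∀ x ∈ w, x ∈ X ∨ x⁻¹ ∈ X

lemma sLen_le_length {w : List G} (hw : IsSymmWord X w) : sLen X w.prod ≤ w.length :=
  Nat.sInf_le ⟨w, hw, rfl, rfl⟩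

lemma exists_isSymmWord_length_eq_sLen (hg : g ∈ closure X) :
    ∃ w : List G, IsSymmWord X w ∧ w.prod = g ∧ w.length = sLen X g := by
  have hne : {n | ∃ w : List G, IsSymmWord X w ∧ w.length = n ∧ w.prod = g}.Nonempty := by
    rw [← mem_toSubmonoid, closure_toSubmonoid] at hg
    obtain ⟨w, hw, hprod⟩ := Submonoid.exists_list_of_mem_closure hg
    exact ⟨w.length, w, hw, rfl, hprod⟩
  obtain ⟨w, hw, hlen, hprod⟩ := Nat.sInf_mem hne
  exact ⟨w, hw, hprod, hlen⟩

lemma sLen_one : sLen X (1 : G) = 0 :=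
  Nat.le_zero.mp (sLen_le_length (w := []) (by simp [IsSymmWord]))

lemma sLen_le_one (hg : g ∈ X ∨ g⁻¹ ∈ X) : sLen X g ≤ 1 := by
  simpa using sLen_le_length (X := X) (w := [g]) (by simpa [IsSymmWord] using hg)

lemma sLen_inv_le (hg : g ∈ closure X) : sLen X g⁻¹ ≤ sLen X g := by
  obtain ⟨w, hw, rfl, hlen⟩ := exists_isSymmWord_length_eq_sLen hg
  have hw' : IsSymmWord X (w.map (·⁻¹)).reverse := by
    simp only [IsSymmWord, List.mem_reverse, List.mem_map, forall_exists_index, and_imp,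
      forall_apply_eq_imp_iff₂, inv_inv]
    exact fun x hx => (hw x hx).symm
  simpa [← hlen, List.prod_inv_reverse] using sLen_le_length hw'

lemma sLen_mul_le (hg : g ∈ closure X) (hh : h ∈ closure X) :
    sLen X (g * h) ≤ sLen X g + sLen X h := by
  obtain ⟨v, hv, rfl, hvlen⟩ := exists_isSymmWord_length_eq_sLen hg
  obtain ⟨w, hw, rfl, hwlen⟩ := exists_isSymmWord_length_eq_sLen hh
  have hvw : IsSymmWord X (v ++ w) := fun x hx => (List.mem_append.mp hx).elim (hv x) (hw x)
  simpa [← hvlen, ← hwlen] using sLen_le_length hvw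

lemma sLen_map_le (f : H →* G) (hX : closure X = ⊤) {Y : Set H} {c : ℕ}
    (hY : ∀ y ∈ Y, sLen X (f y) ≤ c) {h : H} (hh : h ∈ closure Y) :
    sLen X (f h) ≤ c * sLen Y h := by
  have hmem (g : G) : g ∈ closure X := hX ▸ mem_top g
  have hletter (y : H) (hy : y ∈ Y ∨ y⁻¹ ∈ Y) : sLen X (f y) ≤ c := by
    rcases hy with hy | hy
    · exact hY y hy
    · simpa using (sLen_inv_le (hmem (f y⁻¹))).trans (hY _ hy)
  have hword : ∀ w : List H, IsSymmWord Y w → sLen X (f w.prod) ≤ c * w.length := by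
    intro w hw
    induction w with
    | nil => simp [sLen_one]
    | cons y w ih =>
      calc sLen X (f (y :: w).prod) ≤ sLen X (f y) + sLen X (f w.prod) := by
            simpa using sLen_mul_le (hmem (f y)) (hmem (f w.prod))
        _ ≤ c + c * w.length :=
            add_le_add (hletter y (hw y List.mem_cons_self))
              (ih fun x hx => hw x (List.mem_cons_of_mem y hx))
        _ = c * (y :: w).length := by simp [mul_add, add_comm]
  obtain ⟨w, hw, rfl, hlen⟩ := exists_isSymmWord_length_eq_sLen hh
  exact hlen ▸ hword w hw

lemma exists_sLen_le_of_map (f : G →* H) {q : H} (hq : q ∈ closure (f '' X)) :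
    ∃ g, sLen X g ≤ sLen (f '' X) q ∧ f g = q := by
  have hlift : ∀ W : List H, IsSymmWord (f '' X) W →
      ∃ w : List G, IsSymmWord X w ∧ w.length = W.length ∧ f w.prod = W.prod := by
    intro W hW
    induction W with
    | nil => exact ⟨[], by simp [IsSymmWord], rfl, by simp⟩
    | cons q W ih =>
      obtain ⟨w, hw, hlen, hprod⟩ := ih fun x hx => hW x (List.mem_cons_of_mem q hx)
      obtain ⟨x, hx, hxq⟩ : ∃ x, (x ∈ X ∨ x⁻¹ ∈ X) ∧ f x = q := by
        rcases hW q List.mem_cons_self with ⟨x, hx, hxq⟩ | ⟨x, hx, hxq⟩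
        · exact ⟨x, Or.inl hx, hxq⟩
        · exact ⟨x⁻¹, Or.inr (by simpa using hx), by simp [hxq]⟩
      refine ⟨x :: w, ?_, by simp [hlen], by simp [hxq, hprod]⟩
      exact fun y hy => (List.mem_cons.mp hy).elim (fun h => h ▸ hx) (hw y)
  obtain ⟨W, hW, rfl, hWlen⟩ := exists_isSymmWord_length_eq_sLen hq
  obtain ⟨w, hw, hlen, hprod⟩ := hlift W hW
  exact ⟨w.prod, hWlen ▸ hlen ▸ sLen_le_length hw, hprod⟩

end WordLength

section Diameter

variable {G H : Type*} [Group G] [Group H] {X : Set G}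

lemma sLen_le_diamS [Finite G] (g : G) : sLen X g ≤ diamS G X :=
  le_csSup (Set.finite_range _).bddAbove ⟨g, rfl⟩

lemma diamS_le {c : ℕ} (h : ∀ g : G, sLen X g ≤ c) : diamS G X ≤ c :=
  csSup_le' (by rintro d ⟨g, rfl⟩; exact h g)

lemma diamS_le_DS [Finite G] (hX : closure X = ⊤) : diamS G X ≤ DS G := by
  refine le_csSup ((Set.finite_range (diamS G)).subset ?_).bddAbove ⟨X, hX, rfl⟩
  rintro d ⟨Y, -, rfl⟩
  exact ⟨Y, rfl⟩

lemma DS_le {c : ℕ} (h : ∀ X : Set G, closure X = ⊤ → diamS G X ≤ c) : DS G ≤ c :=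
  csSup_le' (by rintro d ⟨X, hX, rfl⟩; exact h X hX)

lemma DS_eq_zero [Subsingleton G] : DS G = 0 :=
  Nat.le_zero.mp <| DS_le fun _ _ => diamS_le fun g => (Subsingleton.elim g 1) ▸ sLen_one.le

lemma DS_le_DS_of_mulEquiv [Finite H] (e : G ≃* H) : DS G ≤ DS H := by
  refine DS_le fun X hX => ?_
  have hY : closure (e '' X) = ⊤ := by
    rw [← e.coe_toMonoidHom, ← MonoidHom.map_closure, hX, map_top_of_surjective _ e.surjective]
  refine (diamS_le fun g => le_trans ?_ (sLen_le_diamS (e g))).trans (diamS_le_DS hY)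
  have hg : e g ∈ closure (e '' X) := hY ▸ mem_top _
  simpa using sLen_map_le (e.symm : H →* G) hX (c := 1)
    (by rintro _ ⟨x, hx, rfl⟩; simpa using sLen_le_one (X := X) (Or.inl hx)) hg

end Diameter

lemma pow_sub_one_le_pow_of_le {j k : ℕ} (hj : 1 ≤ j) (hjk : j ≤ k) :
    k ^ (j - 1) ≤ j ^ k := by
  obtain ⟨m, rfl⟩ : ∃ m, j = m + 1 := ⟨j - 1, by omega⟩
  rcases Nat.eq_zero_or_pos m with rfl | hm
  · simp
  have hm' : (0 : ℝ) < m := by exact_mod_cast hm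
  -- Bernoulli's inequality with the real exponent `k / m ≥ 1`
  have hbern : (1 + k : ℝ) ≤ (1 + m : ℝ) ^ ((k : ℝ) / m) := by
    have hp : (1 : ℝ) ≤ k / m := by
      rw [le_div_iff₀ hm', one_mul]; exact_mod_cast (by omega : m ≤ k)
    simpa [div_mul_cancel₀ _ hm'.ne'] using
      one_add_mul_self_le_rpow_one_add (by linarith : (-1 : ℝ) ≤ m) hp
  have key : (k : ℝ) ^ m ≤ ((m + 1 : ℕ) : ℝ) ^ k := by
    calc (k : ℝ) ^ m ≤ (1 + k : ℝ) ^ m := by gcongr; linarith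
      _ ≤ ((1 + m : ℝ) ^ ((k : ℝ) / m)) ^ m := by gcongr
      _ = ((m + 1 : ℕ) : ℝ) ^ k := by
        rw [← Real.rpow_mul_natCast (by positivity), div_mul_cancel₀ _ hm'.ne']
        push_cast; rw [add_comm, Real.rpow_natCast]
  simpa using (by exact_mod_cast key : k ^ m ≤ (m + 1) ^ k)

lemma orderOf_mk_mul_card_le {Q : Type*} [Group Q] [Finite Q] {S' S : Subgroup Q} [S'.Normal]
    (hS : S' ≤ S) {a : Q} (ha : a ∈ S) :
    orderOf (a : Q ⧸ S') * Nat.card S' ≤ Nat.card S := by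
  let f : Fin (orderOf (a : Q ⧸ S')) × S' → S := fun p =>
    ⟨a ^ (p.1 : ℕ) * p.2, mul_mem (pow_mem ha _) (hS p.2.2)⟩
  have hf : Function.Injective f := by
    rintro ⟨i, s⟩ ⟨i', s'⟩ h
    have h : a ^ (i : ℕ) * s = a ^ (i' : ℕ) * s' := congrArg Subtype.val h
    have hmk : (a : Q ⧸ S') ^ (i : ℕ) = (a : Q ⧸ S') ^ (i' : ℕ) := by
      simpa [← QuotientGroup.mk_pow, QuotientGroup.mk_mul] using
        congrArg (QuotientGroup.mk (s := S')) h
    have hii : i = i' := Fin.ext (pow_injOn_Iio_orderOf i.2 i'.2 hmk)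
    subst hii
    simp [Subtype.ext (mul_left_cancel h)]
  simpa [Nat.card_prod] using Nat.card_le_card_of_injective f hf

section Abelian

variable {Q : Type*} [CommGroup Q] [Finite Q] {k : ℕ}

-- the multiplicative form of `w.length ≤ k * log_k |⟨A⟩|`
open Classical in
lemma exists_word_pow_length_le (hk : 0 < k) (hexp : ∀ q : Q, q ^ k = 1) (A : Finset Q) {g : Q}
    (hg : g ∈ closure (A : Set Q)) : ∃ w : List Q, (∀ x ∈ w, x ∈ A) ∧ w.prod = g ∧
      k ^ w.length ≤ Nat.card (closure (A : Set Q)) ^ k := by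
  induction A using Finset.induction_on generalizing g with
  | empty =>
    rw [Finset.coe_empty, Subgroup.closure_empty, mem_bot] at hg
    exact ⟨[], by simp, by simp [hg], by simp⟩
  | insert a A _ ih =>
    set S' := closure (A : Set Q)
    set S := closure ((insert a A : Finset Q) : Set Q)
    have hS'S : S' ≤ S := closure_mono (by simp)
    have haS : a ∈ S := subset_closure (by simp)
    -- modulo `S'`, the group `S` is cyclic, generated by the image of `a`
    have hSa : S ≤ (zpowers (a : Q ⧸ S')).comap (QuotientGroup.mk' S') := by
      rw [closure_le, Finset.coe_insert, Set.insert_subset_iff]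
      refine ⟨mem_zpowers _, fun x hx => ?_⟩
      have hx1 : (x : Q ⧸ S') = 1 := (QuotientGroup.eq_one_iff x).mpr (subset_closure hx)
      simp only [SetLike.mem_coe, mem_comap, QuotientGroup.mk'_apply, hx1, one_mem]
    obtain ⟨r, hr, hgr⟩ := Finset.mem_image.mp (mem_zpowers_iff_mem_range_orderOf.mp (hSa hg))
    obtain ⟨w, hw, hprod, hlen⟩ :=
      ih (g := (a ^ r)⁻¹ * g) (QuotientGroup.eq.mp (by simpa using hgr))
    refine ⟨List.replicate r a ++ w, ?_, by simp [hprod], ?_⟩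
    · intro x hx
      rcases List.mem_append.mp hx with hx | hx
      · simp [List.eq_of_mem_replicate hx]
      · exact Finset.mem_insert_of_mem (hw x hx)
    set j := orderOf (a : Q ⧸ S')
    have hj : 0 < j := orderOf_pos _
    have hjk : j ≤ k := orderOf_le_of_pow_eq_one hk (by rw [← QuotientGroup.mk_pow, hexp]; rfl)
    have hr' : r < j := Finset.mem_range.mp hr
    calc k ^ (List.replicate r a ++ w).length = k ^ r * k ^ w.length := by simp [pow_add]
      _ ≤ j ^ k * Nat.card S' ^ k := by
        refine Nat.mul_le_mul ?_ hlen
        exact (Nat.pow_le_pow_right hk (by omega : r ≤ j - 1)).trans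
          (pow_sub_one_le_pow_of_le hj hjk)
      _ ≤ Nat.card S ^ k := by
        rw [← mul_pow]; exact Nat.pow_le_pow_left (orderOf_mk_mul_card_le hS'S haS) k

lemma sLen_le_mul_of_pow_eq_one {X : Set Q} (hX : closure X = ⊤) {m : ℕ} (hk : 0 < k)
    (hexp : ∀ q : Q, q ^ k = 1) (hcard : Nat.card Q ≤ k ^ m) (g : Q) : sLen X g ≤ m * k := by
  rcases Nat.lt_or_ge k 2 with hk1 | hk2
  · have : Subsingleton Q := by
      rw [← Finite.card_le_one_iff_subsingleton]; simpa [show k = 1 by omega] using hcard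
    simp [Subsingleton.elim g 1, sLen_one]
  have hXfin : X.Finite := Set.toFinite X
  have hg : g ∈ closure (hXfin.toFinset : Set Q) := by simp [hX]
  obtain ⟨w, hw, rfl, hlen⟩ := exists_word_pow_length_le hk hexp hXfin.toFinset hg
  refine (sLen_le_length fun x hx => Or.inl (by simpa using hw x hx)).trans ?_
  rw [← Nat.pow_le_pow_iff_right hk2, pow_mul]
  calc k ^ w.length ≤ Nat.card (closure (hXfin.toFinset : Set Q)) ^ k := hlen
    _ ≤ Nat.card Q ^ k := by gcongr; exact card_le_card_group _
    _ ≤ (k ^ m) ^ k := by gcongr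

end Abelian

section Schreier

variable {H : Type*} [Group H]

lemma closure_sLen_le_eq_top {X : Set H} (hX : closure X = ⊤) (N : Subgroup H) {d : ℕ}
    (hd : ∀ g : H, ∃ h, sLen X h ≤ d ∧ h⁻¹ * g ∈ N) :
    closure {y : N | sLen X (y : H) ≤ 2 * d + 1} = ⊤ := by
  have hmem (g : H) : g ∈ closure X := hX ▸ mem_top g
  set M := (closure {y : N | sLen X (y : H) ≤ 2 * d + 1}).map N.subtype
  have hMN : M ≤ N := map_subtype_le _
  have hM {y : H} (hy : y ∈ N) (hlen : sLen X y ≤ 2 * d + 1) : y ∈ M :=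
    ⟨⟨y, hy⟩, subset_closure hlen, rfl⟩
  have step (s g : H) (hs : sLen X s ≤ 1) (hg : ∃ h, sLen X h ≤ d ∧ h⁻¹ * g ∈ M) :
      ∃ h, sLen X h ≤ d ∧ h⁻¹ * (s * g) ∈ M := by
    obtain ⟨h', hh', hm⟩ := hg
    obtain ⟨h, hh, hN⟩ := hd (s * h')
    refine ⟨h, hh, ?_⟩
    have hgen : h⁻¹ * (s * h') ∈ M := hM hN <| calc
      sLen X (h⁻¹ * (s * h')) ≤ sLen X h⁻¹ + (sLen X s + sLen X h') :=
        (sLen_mul_le (hmem _) (hmem _)).trans (add_le_add le_rfl (sLen_mul_le (hmem _) (hmem _)))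
      _ ≤ d + (1 + d) := add_le_add ((sLen_inv_le (hmem h)).trans hh) (add_le_add hs hh')
      _ = 2 * d + 1 := by ring
    simpa [mul_assoc] using M.mul_mem hgen hm
  have hcoset (g : H) : ∃ h, sLen X h ≤ d ∧ h⁻¹ * g ∈ M := by
    induction hmem g using closure_induction_left with
    | one =>
      obtain ⟨h, hh, hN⟩ := hd 1
      exact ⟨h, hh, hM hN (by simpa using (sLen_inv_le (hmem h)).trans (hh.trans (by omega)))⟩
    | mul_left x hx y _ ih => exact step x y (sLen_le_one (Or.inl hx)) ih
    | inv_mul_cancel x hx y _ ih => exact step x⁻¹ y (sLen_le_one (Or.inr (by simpa))) ih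
  rw [eq_top_iff]
  rintro ν -
  obtain ⟨h, hh, hm⟩ := hcoset ν
  have hhN : h ∈ N := by simpa using N.mul_mem ν.2 (N.inv_mem (hMN hm))
  obtain ⟨y, hy, hyν⟩ := M.mul_mem (hM hhN (by omega)) hm
  rw [mul_inv_cancel_left] at hyν
  rwa [N.subtype_injective hyν] at hy

lemma DS_le_of_forall_exists_inv_mul_mem [Finite H] (N : Subgroup H) {d : ℕ}
    (hd : ∀ X : Set H, closure X = ⊤ → ∀ g, ∃ h, sLen X h ≤ d ∧ h⁻¹ * g ∈ N) :
    DS H ≤ d + (2 * d + 1) * DS N := by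
  refine DS_le fun X hX => diamS_le fun g => ?_
  have hmem (g : H) : g ∈ closure X := hX ▸ mem_top g
  have hY := closure_sLen_le_eq_top hX N (hd X hX)
  obtain ⟨h, hh, hN⟩ := hd X hX g
  have hν := sLen_map_le N.subtype hX (c := 2 * d + 1) (fun _ hy => hy)
    (hY ▸ mem_top (⟨h⁻¹ * g, hN⟩ : N))
  calc sLen X g = sLen X (h * (h⁻¹ * g)) := by rw [mul_inv_cancel_left]
    _ ≤ sLen X h + sLen X (h⁻¹ * g) := sLen_mul_le (hmem _) (hmem _)
    _ ≤ d + (2 * d + 1) * DS N := by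
      refine add_le_add hh (hν.trans (Nat.mul_le_mul_left _ ?_))
      exact (sLen_le_diamS _).trans (diamS_le_DS hY)

end Schreier

lemma DS_le_of_surjective {H Q : Type*} [Group H] [Finite H] [CommGroup Q] (f : H →* Q)
    (hf : Function.Surjective f) {k m : ℕ} (hk : 0 < k) (hexp : ∀ q : Q, q ^ k = 1)
    (hcard : Nat.card Q ≤ k ^ m) : DS H ≤ m * k + (2 * (m * k) + 1) * DS f.ker := by
  have : Finite Q := Finite.of_surjective f hf
  refine DS_le_of_forall_exists_inv_mul_mem f.ker fun X hX g => ?_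
  have hXQ : closure (f '' X) = ⊤ := by
    rw [← MonoidHom.map_closure, hX, map_top_of_surjective f hf]
  obtain ⟨h, hh, hfh⟩ := exists_sLen_le_of_map f (hXQ ▸ mem_top (f g))
  refine ⟨h, hh.trans (sLen_le_mul_of_pow_eq_one hXQ hk hexp hcard _), ?_⟩
  simp [MonoidHom.mem_ker, hfh]

section DerivedSeries

variable {G : Type*} [Group G]

lemma map_subtype_derivedSeries_commutator (n : ℕ) :
    (derivedSeries (commutator G) n).map (commutator G).subtype = derivedSeries G (n + 1) := by
  induction n with
  | zero => rw [derivedSeries_zero, ← MonoidHom.range_eq_map, range_subtype, derivedSeries_one]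
  | succ n ih => rw [derivedSeries_succ, map_commutator, ih, ← derivedSeries_succ]

lemma derivedSeries_commutator_eq_bot {l : ℕ} (hl : derivedSeries G (l + 1) = ⊥) :
    derivedSeries (commutator G) l = ⊥ := by
  rw [← map_eq_bot_iff_of_injective (H := derivedSeries (commutator G) l)
    (commutator G).subtype_injective, map_subtype_derivedSeries_commutator, hl]

lemma DS_pi_le_DS_pi_commutator (ι : Type*) [Finite ι] [Finite G] :
    DS (ι → G) ≤ Nat.card ι * Nat.card (Abelianization G) +
      (2 * (Nat.card ι * Nat.card (Abelianization G)) + 1) * DS (ι → commutator G) := by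
  set f := MonoidHom.compLeft (Abelianization.of (G := G)) ι
  have hf : Function.Surjective f := QuotientGroup.mk_surjective.comp_left
  have hker {x : ι → G} : x ∈ f.ker ↔ ∀ i, x i ∈ commutator G := by
    simp [f, MonoidHom.mem_ker, funext_iff, ← Abelianization.ker_of]
  let e : f.ker ≃* (ι → commutator G) :=
    { toFun x i := ⟨x.1 i, hker.mp x.2 i⟩
      invFun y := ⟨fun i => y i, hker.mpr fun i => (y i).2⟩
      left_inv _ := rfl
      right_inv _ := rfl
      map_mul' _ _ := rfl }
  refine (DS_le_of_surjective f hf Nat.card_pos (fun q => funext fun i => pow_card_eq_one')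
    (Nat.card_fun.le)).trans ?_
  exact add_le_add le_rfl (Nat.mul_le_mul_left _ (DS_le_DS_of_mulEquiv e))

end DerivedSeries

lemma DS_pi_le_of_derivedSeries_eq_bot (l : ℕ) {G : Type*} [Group G] [Finite G]
    (hl : derivedSeries G l = ⊥) (ι : Type*) [Finite ι] [Nonempty ι] :
    DS (ι → G) ≤ 4 ^ (l - 1) * Nat.card ι ^ l * Nat.card G := by
  induction l generalizing G with
  | zero =>
    have : Subsingleton G := subsingleton_iff.mp (subsingleton_of_bot_eq_top hl.symm)
    simp [DS_eq_zero]
  | succ l ih =>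
    have hstep := DS_pi_le_DS_pi_commutator ι (G := G)
    have hcard : Nat.card G = Nat.card (Abelianization G) * Nat.card (commutator G) :=
      card_eq_card_quotient_mul_card_subgroup _
    set n := Nat.card ι
    set k := Nat.card (Abelianization G)
    set c := Nat.card (commutator G)
    have hn : 0 < n := Nat.card_pos
    have hk : 0 < k := Nat.card_pos
    have hc : 0 < c := Nat.card_pos
    rw [hcard]
    cases l with
    | zero =>
      have : Subsingleton (commutator G) := by
        rw [← derivedSeries_one, hl]; infer_instance
      rw [DS_eq_zero (G := ι → commutator G), mul_zero, add_zero] at hstep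
      calc DS (ι → G) ≤ n * k := hstep
        _ ≤ 4 ^ 0 * n ^ 1 * (k * c) := by simpa [← mul_assoc] using Nat.le_mul_of_pos_right _ hc
    | succ l =>
      set B := 4 ^ l * n ^ (l + 1) * c
      have hB : 0 < B := by positivity
      have hnk : 0 < n * k := by positivity
      calc DS (ι → G) ≤ n * k + (2 * (n * k) + 1) * B :=
            hstep.trans (by gcongr; simpa using ih (derivedSeries_commutator_eq_bot hl))
        _ ≤ 4 * (n * k) * B := by nlinarith
        _ = 4 ^ (l + 1 + 1 - 1) * n ^ (l + 1 + 1) * (k * c) := by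
          simp only [B, Nat.add_sub_cancel]; ring

theorem stmt17_general {G : Type*} [Group G] [Finite G] (l : ℕ)
    (hl : derivedSeries G l = ⊥) :
    ∀ n : ℕ, 1 ≤ n → DS (Fin n → G) ≤ 4 ^ (l - 1) * n ^ l * Nat.card G := by
  intro n hn
  have : Nonempty (Fin n) := ⟨⟨0, hn⟩⟩
  simpa using DS_pi_le_of_derivedSeries_eq_bot l hl (Fin n)

theorem stmt17 {G : Type*} [Group G] [Finite G] [Group.IsSolvable G] (l : ℕ)
    (hl : derivedSeries G l = ⊥) (hmin : ∀ m < l, derivedSeries G m ≠ ⊥) :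
    ∀ n : ℕ, 1 ≤ n → DS (Fin n → G) ≤ 4 ^ (l - 1) * n ^ l * Nat.card G :=
  stmt17_general l hl
end

section
/- For every n ≥ 1, the maximum diameter of (Q₈)^n over all generating sets satisfies D(Q₈^n) ≤ 8n² + 3n, where Q₈ is the quaternion group of order 8. -/
/-!
Killing `{±1}ⁿ` maps `Q₈ⁿ` homomorphically onto the `ZMod 2`-vector space `((ZMod 2)²)ⁿ` of
dimension `2n`. For a generating set `X`, the images of `X` span this space, so every coset of the
kernel contains a positive word over `X` of length at most `2n`: a sum of distinct vectors from a
basis chosen inside the image of `X`. Every element of the kernel is a square `s²`, and writing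
`s = w k` with `w` such a word and `k` in the kernel, which is central of exponent `2`, gives
`s² = w²`. So every element of `Q₈ⁿ` is a positive word of length at most `2n + 2 · 2n = 6n`.
-/

open Subgroup

open Module Multiplicative

section WordLength

variable {G : Type*} [Group G] {X : Set G}

theorem wLen_prod_le_length {l : List G} (hl : ∀ x ∈ l, x ∈ X) : wLen X l.prod ≤ l.length :=
  Nat.sInf_le ⟨l, hl, rfl, rfl⟩

theorem diamW_le {m : ℕ} (h : ∀ g, wLen X g ≤ m) : diamW G X ≤ m :=
  csSup_le (Set.range_nonempty _) (Set.forall_mem_range.2 h)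

theorem DW_le {m : ℕ} (h : ∀ X : Set G, closure X = ⊤ → diamW G X ≤ m) : DW G ≤ m :=
  csSup_le ⟨_, Set.univ, closure_univ, rfl⟩ (by rintro _ ⟨X, hX, rfl⟩; exact h X hX)

end WordLength

section ElementaryAbelian

variable {V : Type*} [AddCommGroup V] [Module (ZMod 2) V]

theorem exists_finset_sum_eq_of_mem_span [Module.Finite (ZMod 2) V] {S : Set V} {v : V}
    (hv : v ∈ Submodule.span (ZMod 2) S) :
    ∃ s : Finset V, ↑s ⊆ S ∧ s.card ≤ finrank (ZMod 2) V ∧ ∑ x ∈ s, x = v := by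
  obtain ⟨b, hbS, hspan, hind⟩ := exists_linearIndependent (ZMod 2) S
  obtain ⟨c, hcb, rfl⟩ := Submodule.mem_span_set.1 (hspan ▸ hv)
  refine ⟨c.support, hcb.trans hbS, ?_, ?_⟩
  · exact (LinearIndepOn.mono (v := id) hind hcb).finset_card_le_finrank
  · refine Finset.sum_congr rfl fun x hx => ?_
    have hcx : c x = 1 := Fin.eq_one_of_ne_zero _ (Finsupp.mem_support_iff.1 hx)
    rw [hcx]
    exact (one_smul _ x).symm

variable {G : Type*} [Group G] {X : Set G}

theorem toAdd_mem_span_image_of_closure_eq_top (φ : G →* Multiplicative V)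
    (hX : closure X = ⊤) (g : G) :
    toAdd (φ g) ∈ Submodule.span (ZMod 2) ((fun x => toAdd (φ x)) '' X) := by
  induction (hX ▸ mem_top g : g ∈ closure X) using closure_induction with
  | mem x hx => exact Submodule.subset_span ⟨x, hx, rfl⟩
  | one => simp
  | mul a b _ _ ha hb => simpa using add_mem ha hb
  | inv a _ ha => simpa using neg_mem ha

theorem exists_list_map_prod_eq [Module.Finite (ZMod 2) V] (φ : G →* Multiplicative V)
    (hX : closure X = ⊤) (g : G) :
    ∃ l : List G, (∀ x ∈ l, x ∈ X) ∧ l.length ≤ finrank (ZMod 2) V ∧ φ l.prod = φ g := by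
  set ψ : G → V := fun x => toAdd (φ x)
  obtain ⟨s, hsX, hcard, hsum⟩ :=
    exists_finset_sum_eq_of_mem_span (toAdd_mem_span_image_of_closure_eq_top φ hX g)
  have hlift : ∀ v ∈ s, ∃ x ∈ X, ψ x = v := fun v hv => hsX hv
  refine ⟨s.toList.map (Function.invFunOn ψ X), ?_, by simpa using hcard, ?_⟩
  · simp only [List.mem_map, Finset.mem_toList]
    rintro _ ⟨v, hv, rfl⟩
    exact Function.invFunOn_mem (hlift v hv)
  · rw [map_list_prod, List.map_map, Finset.prod_map_toList, ← ofAdd_toAdd (φ g), ← hsum,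
      ofAdd_sum]
    exact Finset.prod_congr rfl fun v hv => congrArg ofAdd (Function.invFunOn_eq (hlift v hv))

end ElementaryAbelian

section SquaringTrick

variable {G : Type*} [Group G] {X : Set G}
  {V : Type*} [AddCommGroup V] [Module (ZMod 2) V] [Module.Finite (ZMod 2) V]

theorem exists_list_prod_eq_of_ker (φ : G →* Multiplicative V) (hX : closure X = ⊤)
    (hsq : ∀ k, φ k = 1 → ∃ s, s ^ 2 = k) (hcenter : ∀ k, φ k = 1 → k ∈ center G)
    (hinvol : ∀ k, φ k = 1 → k ^ 2 = 1) (g : G) :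
    ∃ l : List G, (∀ x ∈ l, x ∈ X) ∧ l.length ≤ 3 * finrank (ZMod 2) V ∧ l.prod = g := by
  obtain ⟨w₁, hw₁X, hw₁len, hw₁⟩ := exists_list_map_prod_eq φ hX g
  obtain ⟨s, hs⟩ := hsq (w₁.prod⁻¹ * g) (by simp [hw₁])
  obtain ⟨w₂, hw₂X, hw₂len, hw₂⟩ := exists_list_map_prod_eq φ hX s
  set k := w₂.prod⁻¹ * s
  have hk : φ k = 1 := by simp [k, hw₂]
  have hs_sq : s ^ 2 = w₂.prod ^ 2 := by
    have hcomm : Commute w₂.prod k := mem_center_iff.1 (hcenter k hk) w₂.prod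
    rw [← mul_inv_cancel_left w₂.prod s, hcomm.mul_pow, hinvol k hk, mul_one]
  refine ⟨w₁ ++ w₂ ++ w₂, ?_, ?_, ?_⟩
  · simp only [List.mem_append]
    rintro x ((hx | hx) | hx)
    exacts [hw₁X x hx, hw₂X x hx, hw₂X x hx]
  · simp only [List.length_append]
    omega
  · rw [List.prod_append, List.prod_append, mul_assoc, ← sq, ← hs_sq, hs, mul_inv_cancel_left]

end SquaringTrick

section Quaternion

-- `Q₈ → Q₈ ⧸ {±1} ≅ (ZMod 2)²`
def quaternionAbel : QuaternionGroup 2 → ZMod 2 × ZMod 2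
  | .a i => ((i.val : ZMod 2), 0)
  | .xa i => ((i.val : ZMod 2), 1)

theorem quaternionAbel_one : quaternionAbel 1 = 0 := rfl

theorem quaternionAbel_mul : ∀ q r : QuaternionGroup 2,
    quaternionAbel (q * r) = quaternionAbel q + quaternionAbel r := by decide

theorem exists_sq_eq_of_quaternionAbel_eq_zero :
    ∀ q : QuaternionGroup 2, quaternionAbel q = 0 → ∃ s, s ^ 2 = q := by decide

theorem mem_center_of_quaternionAbel_eq_zero :
    ∀ q : QuaternionGroup 2, quaternionAbel q = 0 → q ∈ center (QuaternionGroup 2) := by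
  decide

theorem sq_eq_one_of_quaternionAbel_eq_zero :
    ∀ q : QuaternionGroup 2, quaternionAbel q = 0 → q ^ 2 = 1 := by decide

variable (ι : Type*)

def quaternionPiAbel : (ι → QuaternionGroup 2) →* Multiplicative (ι → ZMod 2 × ZMod 2) where
  toFun g := ofAdd fun j => quaternionAbel (g j)
  map_one' := congrArg ofAdd (funext fun _ => quaternionAbel_one)
  map_mul' g h := congrArg ofAdd (funext fun j => quaternionAbel_mul (g j) (h j))

variable {ι} {k : ι → QuaternionGroup 2}

theorem quaternionPiAbel_eq_one_iff : quaternionPiAbel ι k = 1 ↔ ∀ j, quaternionAbel (k j) = 0 :=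
  funext_iff

theorem exists_sq_eq_of_quaternionPiAbel_eq_one (hk : quaternionPiAbel ι k = 1) :
    ∃ s, s ^ 2 = k := by
  choose s hs using fun j =>
    exists_sq_eq_of_quaternionAbel_eq_zero _ (quaternionPiAbel_eq_one_iff.1 hk j)
  exact ⟨s, funext hs⟩

theorem mem_center_of_quaternionPiAbel_eq_one (hk : quaternionPiAbel ι k = 1) :
    k ∈ center (ι → QuaternionGroup 2) :=
  mem_center_iff.2 fun g => funext fun j => mem_center_iff.1
    (mem_center_of_quaternionAbel_eq_zero _ (quaternionPiAbel_eq_one_iff.1 hk j)) (g j)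

theorem sq_eq_one_of_quaternionPiAbel_eq_one (hk : quaternionPiAbel ι k = 1) : k ^ 2 = 1 :=
  funext fun j => sq_eq_one_of_quaternionAbel_eq_zero _ (quaternionPiAbel_eq_one_iff.1 hk j)

theorem DW_quaternion_pi_le (n : ℕ) : DW (Fin n → QuaternionGroup 2) ≤ 6 * n := by
  have hrank : finrank (ZMod 2) (Fin n → ZMod 2 × ZMod 2) = 2 * n := by
    simp [finrank_pi_fintype, finrank_prod, mul_comm]
  refine DW_le fun X hX => diamW_le fun g => ?_
  obtain ⟨l, hlX, hlen, rfl⟩ := exists_list_prod_eq_of_ker (quaternionPiAbel (Fin n)) hX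
    (fun _ => exists_sq_eq_of_quaternionPiAbel_eq_one)
    (fun _ => mem_center_of_quaternionPiAbel_eq_one)
    (fun _ => sq_eq_one_of_quaternionPiAbel_eq_one) g
  exact (wLen_prod_le_length hlX).trans (by omega)

end Quaternion

theorem stmt19 : ∀ n : ℕ, 1 ≤ n →
    DW (Fin n → QuaternionGroup 2) ≤ 8 * n ^ 2 + 3 * n :=
  fun n _ => (DW_quaternion_pi_le n).trans (by nlinarith)
end
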